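/- arXiv:1810.11232 — 2 statements merged into one kernel-verified Lean document; each statement's English description precedes it below -/
import Mathlib

section
/- Let X be the sum of n independent exponentially distributed random variables with rates c, 2c, ..., nc (i.e., X ~ ∑_{i=1}^n Exp(ci)) for c > 0. Then for any a ≥ 0, P(X ≤ a) = (1 - e^{-ca})^n. -/
/-!
Induct on `n`. The last summand `Exp(c(n+1))` is independent of the others, so the distribution
function of the sum is `F_{n+1}(a) = ∫ F_n(a - w) c(n+1) e^{-c(n+1)w} dw`, with `F_0` the
indicator of `[0, ∞)`. The candidate `F_n(a) = (1 - e^{-ca})^n` satisfies this recursion because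
`w ↦ -(1 - e^{-c(a-w)})^{n+1} e^{-c(n+1)w}` is an antiderivative of the integrand on `[0, a]`,
vanishing at `w = a`.
-/

open MeasureTheory ProbabilityTheory Real Set
open scoped ENNReal

namespace ProbabilityTheory

theorem IndepFun.measure_add_le_eq_lintegral {Ω : Type*} [MeasurableSpace Ω] {μ : Measure Ω}
    [IsFiniteMeasure μ] {X Y : Ω → ℝ} (hX : Measurable X) (hY : Measurable Y)
    (hXY : IndepFun X Y μ) (a : ℝ) :
    μ {ω | X ω + Y ω ≤ a} = ∫⁻ y, μ.map X (Iic (a - y)) ∂(μ.map Y) := by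
  have hs : MeasurableSet {p : ℝ × ℝ | p.1 + p.2 ≤ a} :=
    measurableSet_le (by fun_prop) measurable_const
  calc μ {ω | X ω + Y ω ≤ a} = μ.map (X + Y) (Iic a) :=
        (Measure.map_apply (hX.add hY) measurableSet_Iic).symm
    _ = (μ.map X).prod (μ.map Y) {p | p.1 + p.2 ≤ a} := by
        rw [hXY.map_add_eq_map_conv_map hX hY, Measure.conv,
          Measure.map_apply measurable_add measurableSet_Iic]
        rfl
    _ = ∫⁻ y, μ.map X (Iic (a - y)) ∂(μ.map Y) := by
        rw [Measure.prod_apply_symm hs]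
        simp only [preimage_ofPred_eq, ← le_sub_iff_add_le]
        rfl

/-- The distribution function of the maximum of `n` i.i.d. `Exp(c)` variables, the empty
maximum being `0`. -/
noncomputable def expMaxCDF (c : ℝ) (n : ℕ) (a : ℝ) : ℝ≥0∞ :=
  if 0 ≤ a then ENNReal.ofReal ((1 - exp (-(c * a))) ^ n) else 0

lemma measurable_expMaxCDF (c : ℝ) (n : ℕ) : Measurable (expMaxCDF c n) :=
  Measurable.ite measurableSet_Ici (by fun_prop) measurable_const

lemma integral_mul_exp_mul_one_sub_exp_pow (c : ℝ) (n : ℕ) (a : ℝ) :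
    ∫ w in (0 : ℝ)..a, c * (n + 1) * exp (-(c * (n + 1) * w)) * (1 - exp (-(c * (a - w)))) ^ n
      = (1 - exp (-(c * a))) ^ (n + 1) := by
  set q := exp (-(c * a))
  let F : ℝ → ℝ := fun w => -((1 - q * exp (c * w)) ^ (n + 1) * exp (-(c * (n + 1) * w)))
  have hF : ∀ w, HasDerivAt F
      (c * (n + 1) * exp (-(c * (n + 1) * w)) * (1 - exp (-(c * (a - w)))) ^ n) w := by
    intro w
    have hexp : HasDerivAt (fun w : ℝ => exp (c * w)) (c * exp (c * w)) w := by
      simpa [mul_comm] using ((hasDerivAt_id w).const_mul c).exp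
    have hdecay : HasDerivAt (fun w : ℝ => exp (-(c * (n + 1) * w)))
        (-(c * (n + 1)) * exp (-(c * (n + 1) * w))) w := by
      simpa [mul_comm, neg_mul] using ((hasDerivAt_id w).const_mul (-(c * ((n : ℝ) + 1)))).exp
    have hq : exp (-(c * (a - w))) = q * exp (c * w) := by
      rw [← exp_add]; ring_nf
    refine ((((hexp.const_mul q).const_sub 1).fun_pow (n + 1)).fun_mul hdecay).fun_neg
      |>.congr_deriv ?_
    rw [hq]; push_cast; ring
  rw [intervalIntegral.integral_eq_sub_of_hasDerivAt (fun w _ => hF w)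
    (Continuous.intervalIntegrable (by fun_prop) _ _)]
  have hqa : q * exp (c * a) = 1 := by rw [← exp_add]; simp
  simp [F, hqa]

lemma exponentialPDF_mul_expMaxCDF_sub {c : ℝ} (hc : 0 < c) (n : ℕ) (a w : ℝ) :
    exponentialPDF (c * (n + 1)) w * expMaxCDF c n (a - w) = (Icc 0 a).indicator
      (fun w => ENNReal.ofReal
        (c * (n + 1) * exp (-(c * (n + 1) * w)) * (1 - exp (-(c * (a - w)))) ^ n)) w := by
  rcases lt_or_ge w 0 with hw | hw
  · rw [exponentialPDF_of_neg hw, zero_mul, indicator_of_notMem (fun h => hw.not_ge h.1)]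
  rcases le_or_gt w a with hwa | hwa
  · rw [exponentialPDF_of_nonneg hw, expMaxCDF, if_pos (sub_nonneg.2 hwa),
      indicator_of_mem (mem_Icc.2 ⟨hw, hwa⟩), ← ENNReal.ofReal_mul (by positivity)]
  · rw [expMaxCDF, if_neg (by linarith), mul_zero, indicator_of_notMem (fun h => hwa.not_ge h.2)]

lemma lintegral_exponentialPDF_mul_expMaxCDF_sub {c : ℝ} (hc : 0 < c) (n : ℕ) (a : ℝ) :
    ∫⁻ w, exponentialPDF (c * (n + 1)) w * expMaxCDF c n (a - w) = expMaxCDF c (n + 1) a := by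
  simp_rw [exponentialPDF_mul_expMaxCDF_sub hc, lintegral_indicator measurableSet_Icc]
  by_cases ha : 0 ≤ a
  swap
  · simp [expMaxCDF, ha]
  have hnonneg : ∀ w ∈ Icc 0 a,
      0 ≤ c * (n + 1) * exp (-(c * (n + 1) * w)) * (1 - exp (-(c * (a - w)))) ^ n := by
    rintro w ⟨-, hwa⟩
    have hexp_le : exp (-(c * (a - w))) ≤ 1 := exp_le_one_iff.2 (by nlinarith)
    exact mul_nonneg (by positivity) (pow_nonneg (sub_nonneg.2 hexp_le) n)
  rw [← ofReal_integral_eq_lintegral_ofReal (Continuous.integrableOn_Icc (by fun_prop))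
      ((ae_restrict_iff' measurableSet_Icc).2 (Filter.Eventually.of_forall hnonneg)),
    integral_Icc_eq_integral_Ioc, ← intervalIntegral.integral_of_le ha,
    integral_mul_exp_mul_one_sub_exp_pow, expMaxCDF, if_pos ha]

theorem measure_sum_le_eq_expMaxCDF {Ω : Type*} [MeasurableSpace Ω] {μ : Measure Ω}
    [IsProbabilityMeasure μ] {c : ℝ} (hc : 0 < c) :
    ∀ {n : ℕ} {X : Fin n → Ω → ℝ}, (∀ i, Measurable (X i)) → iIndepFun X μ →
      (∀ i : Fin n, μ.map (X i) = expMeasure (c * ((i : ℕ) + 1))) →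
      ∀ a, μ {ω | ∑ i, X i ω ≤ a} = expMaxCDF c n a
  | 0, _, _, _, _, a => by
    by_cases ha : 0 ≤ a <;> simp [expMaxCDF, ha]
  | n + 1, X, hmeas, hindep, hdist, a => by
    set V : Ω → ℝ := fun ω => ∑ i : Fin n, X i.castSucc ω
    have hV : Measurable V := Finset.measurable_sum _ fun i _ => hmeas i.castSucc
    have hVW : IndepFun V (X (Fin.last n)) μ := by
      convert hindep.indepFun_finsetSum_of_notMem hmeas (s := Finset.univ.map Fin.castSuccEmb)
        (i := Fin.last n) (by simp) using 1
      funext ω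
      rw [Finset.sum_apply, Finset.sum_map]
      rfl
    have hV_cdf : ∀ b, μ.map V (Iic b) = expMaxCDF c n b := fun b => by
      rw [Measure.map_apply hV measurableSet_Iic]
      exact measure_sum_le_eq_expMaxCDF hc (fun i => hmeas _)
        (hindep.precomp (Fin.castSucc_injective n)) (fun i => by simpa using hdist i.castSucc) b
    have hW : μ.map (X (Fin.last n)) = volume.withDensity (exponentialPDF (c * (n + 1))) := by
      rw [hdist, Fin.val_last]
      rfl
    have hpdf : Measurable (exponentialPDF (c * (n + 1))) :=
      (measurable_exponentialPDFReal _).ennreal_ofReal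
    have hcdf : Measurable fun w => expMaxCDF c n (a - w) :=
      (measurable_expMaxCDF c n).comp (measurable_const.sub measurable_id)
    simp only [Fin.sum_univ_castSucc]
    rw [hVW.measure_add_le_eq_lintegral hV (hmeas _), hW]
    simp_rw [hV_cdf]
    rw [lintegral_withDensity_eq_lintegral_mul _ hpdf hcdf]
    exact lintegral_exponentialPDF_mul_expMaxCDF_sub hc n a

end ProbabilityTheory

theorem stmt_1 {Ω : Type*} [MeasurableSpace Ω] (μ : Measure Ω) [IsProbabilityMeasure μ]
    (n : ℕ) (c : ℝ) (hc : 0 < c) (X : Fin n → Ω → ℝ)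
    (hmeas : ∀ i, Measurable (X i))
    (hindep : iIndepFun X μ)
    (hdist : ∀ i : Fin n, μ.map (X i) = expMeasure (c * ((i : ℕ) + 1)))
    (a : ℝ) (ha : 0 ≤ a) :
    μ {ω | ∑ i, X i ω ≤ a} = ENNReal.ofReal ((1 - Real.exp (-(c * a))) ^ n) := by
  rw [measure_sum_le_eq_expMaxCDF hc hmeas hindep hdist a, expMaxCDF, if_pos ha]
end

section
/- Let X = ∑_{i=1}^n X_i with X_i ~ Exp(a_i) independent. Let μ = E[X] = ∑_{i=1}^n 1/a_i and a_* = min_i a_i. Then for any 0 < λ ≤ 1, P(X ≤ λμ) ≤ exp(-a_* μ (λ - 1 - ln λ)). -/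
/-!
Chernoff's bound for the lower tail with a parameter `t ≤ 0` gives
`P(X ≤ λμ) ≤ e^{-tλμ} ∏ aᵢ / (aᵢ - t)`. Take `t = -a_* (λ⁻¹ - 1)`. With `wᵢ = a_* / aᵢ ∈ [0, 1]`,
Bernoulli's inequality `(λ⁻¹)^wᵢ ≤ 1 + wᵢ (λ⁻¹ - 1)` bounds the `i`-th factor by `λ^wᵢ`, so the
product is at most `λ^{a_* μ}`, and `e^{a_* (1 - λ) μ} λ^{a_* μ}` is the claimed bound.
-/

open MeasureTheory ProbabilityTheory Real Set

section ExpMeasure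

variable {r t : ℝ}

lemma expMeasure_eq_withDensity_toNNReal :
    expMeasure r = volume.withDensity fun x => ((gammaPDFReal 1 r x).toNNReal : ENNReal) := rfl

lemma toNNReal_gammaPDFReal_one_smul_exp_mul (hr : 0 < r) :
    (fun x => (gammaPDFReal 1 r x).toNNReal • exp (t * x))
      = (Ici 0).indicator (fun x => r * exp (-((r - t) * x))) := by
  funext x
  rw [NNReal.smul_def, Real.coe_toNNReal _ (gammaPDFReal_nonneg zero_lt_one hr x), gammaPDFReal]
  simp only [rpow_one, Gamma_one, div_one, sub_self, rpow_zero, mul_one, smul_eq_mul]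
  by_cases hx : 0 ≤ x
  · rw [if_pos hx, indicator_of_mem (mem_Ici.mpr hx), mul_assoc, ← exp_add]
    ring_nf
  · rw [if_neg hx, indicator_of_notMem (fun h => hx (mem_Ici.mp h)), zero_mul]

lemma integrable_exp_mul_expMeasure (hr : 0 < r) (ht : t < r) :
    Integrable (fun x => exp (t * x)) (expMeasure r) := by
  rw [expMeasure_eq_withDensity_toNNReal,
    integrable_withDensity_iff_integrable_smul (measurable_gammaPDFReal 1 r).real_toNNReal,
    toNNReal_gammaPDFReal_one_smul_exp_mul hr, integrable_indicator_iff measurableSet_Ici,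
    integrableOn_Ici_iff_integrableOn_Ioi]
  have h := (exp_neg_integrableOn_Ioi 0 (sub_pos.2 ht)).const_mul r
  simp only [neg_mul] at h
  exact h

lemma mgf_id_expMeasure (hr : 0 < r) (ht : t < r) :
    mgf id (expMeasure r) t = r / (r - t) := by
  rw [mgf, expMeasure_eq_withDensity_toNNReal,
    integral_withDensity_eq_integral_smul (measurable_gammaPDFReal 1 r).real_toNNReal]
  simp only [id, toNNReal_gammaPDFReal_one_smul_exp_mul hr]
  rw [integral_indicator measurableSet_Ici, integral_Ici_eq_integral_Ioi, integral_const_mul]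
  have h := integral_comp_mul_left_Ioi (fun x => exp (-x)) 0 (sub_pos.2 ht)
  simp only [mul_zero, integral_exp_neg_Ioi_zero, smul_eq_mul, mul_one] at h
  rw [h, div_eq_mul_inv]

end ExpMeasure

lemma measureReal_sum_le_le_exp_mul_prod_of_expMeasure {Ω ι : Type*} [MeasurableSpace Ω]
    {μ : Measure Ω} [IsFiniteMeasure μ] {X : ι → Ω → ℝ} {a : ι → ℝ} (s : Finset ι)
    (ha : ∀ i, 0 < a i) (hmeas : ∀ i, Measurable (X i)) (hindep : iIndepFun X μ)
    (hdist : ∀ i, μ.map (X i) = expMeasure (a i)) {t : ℝ} (ht : t ≤ 0) (c : ℝ) :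
    μ.real {ω | ∑ i ∈ s, X i ω ≤ c} ≤ exp (-t * c) * ∏ i ∈ s, a i / (a i - t) := by
  have hta : ∀ i, t < a i := fun i => ht.trans_lt (ha i)
  have hint (i : ι) : Integrable ((fun x => exp (t * x)) ∘ X i) μ :=
    (integrable_map_measure (by fun_prop) (hmeas i).aemeasurable).mp
      ((hdist i).symm ▸ integrable_exp_mul_expMeasure (ha i) (hta i))
  have hmgf : ∀ i, mgf (X i) μ t = a i / (a i - t) := fun i => by
    rw [← mgf_id_map (hmeas i).aemeasurable, hdist i, mgf_id_expMeasure (ha i) (hta i)]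
  have hchernoff := measure_le_le_exp_mul_mgf c ht
    (hindep.integrable_exp_mul_sum (s := s) hmeas fun i _ => hint i)
  rw [hindep.mgf_sum hmeas s] at hchernoff
  simpa only [Finset.sum_apply, hmgf] using hchernoff

lemma inv_one_add_mul_inv_sub_one_le_rpow {l w : ℝ} (hl : 0 < l) (hw0 : 0 ≤ w) (hw1 : w ≤ 1) :
    (1 + w * (l⁻¹ - 1))⁻¹ ≤ l ^ w := by
  have hbernoulli : l⁻¹ ^ w ≤ 1 + w * (l⁻¹ - 1) := by
    simpa only [add_sub_cancel] using
      rpow_one_add_le_one_add_mul_self (by linarith [inv_pos.2 hl] : -1 ≤ l⁻¹ - 1) hw0 hw1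
  rw [← inv_inv (l ^ w), ← inv_rpow hl.le]
  exact inv_anti₀ (by positivity) hbernoulli

lemma prod_div_add_mul_inv_sub_one_le_rpow {ι : Type*} (s : Finset ι) {a : ι → ℝ} {b l : ℝ}
    (ha : ∀ i, 0 < a i) (hb : 0 ≤ b) (hba : ∀ i, b ≤ a i) (hl : 0 < l) :
    ∏ i ∈ s, a i / (a i + b * (l⁻¹ - 1)) ≤ l ^ (b * ∑ i ∈ s, 1 / a i) := by
  have hfactor : ∀ i, a i / (a i + b * (l⁻¹ - 1)) = (1 + b / a i * (l⁻¹ - 1))⁻¹ := fun i => by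
    rw [div_mul_eq_mul_div, one_add_div (ha i).ne', inv_div]
  calc ∏ i ∈ s, a i / (a i + b * (l⁻¹ - 1))
      ≤ ∏ i ∈ s, l ^ (b / a i) := by
        refine Finset.prod_le_prod (fun i _ => ?_) fun i _ => ?_
        · have := mul_nonneg hb (inv_nonneg.2 hl.le)
          exact div_nonneg (ha i).le (by linarith [hba i])
        · rw [hfactor]
          exact inv_one_add_mul_inv_sub_one_le_rpow hl (div_nonneg hb (ha i).le)
            ((div_le_one (ha i)).2 (hba i))
    _ = l ^ (b * ∑ i ∈ s, 1 / a i) := by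
        rw [← rpow_sum_of_pos hl, Finset.mul_sum]
        simp only [mul_one_div]

theorem stmt_3_general {Ω : Type*} [MeasurableSpace Ω] (μ : Measure Ω) [IsProbabilityMeasure μ]
    (n : ℕ) (a : Fin n → ℝ) (ha : ∀ i, 0 < a i)
    (X : Fin n → Ω → ℝ)
    (hmeas : ∀ i, Measurable (X i))
    (hindep : iIndepFun X μ)
    (hdist : ∀ i, μ.map (X i) = expMeasure (a i))
    (μmean astar : ℝ)
    (hμmean : μmean = ∑ i, 1 / a i)
    (hastar : astar = ⨅ i, a i)
    (lam : ℝ) (hlam0 : 0 < lam) (hlam1 : lam ≤ 1) :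
    μ {ω | ∑ i, X i ω ≤ lam * μmean} ≤
      ENNReal.ofReal (Real.exp (-(astar * μmean * (lam - 1 - Real.log lam)))) := by
  have hastar_nonneg : 0 ≤ astar := hastar ▸ Real.iInf_nonneg fun i => (ha i).le
  have hastar_le : ∀ i, astar ≤ a i := fun i => hastar ▸ ciInf_le (Finite.bddBelow_range a) i
  have hlam_inv : 0 ≤ lam⁻¹ - 1 := sub_nonneg.2 ((one_le_inv₀ hlam0).2 hlam1)
  have hchernoff := measureReal_sum_le_le_exp_mul_prod_of_expMeasure Finset.univ ha hmeas hindep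
    hdist (neg_nonpos.2 (mul_nonneg hastar_nonneg hlam_inv)) (lam * μmean)
  simp only [sub_neg_eq_add, neg_neg] at hchernoff
  have hprod := prod_div_add_mul_inv_sub_one_le_rpow Finset.univ ha hastar_nonneg hastar_le hlam0
  rw [← hμmean] at hprod
  rw [← ofReal_measureReal]
  refine ENNReal.ofReal_le_ofReal (hchernoff.trans ?_)
  calc exp (astar * (lam⁻¹ - 1) * (lam * μmean)) * ∏ i, a i / (a i + astar * (lam⁻¹ - 1))
      ≤ exp (astar * (lam⁻¹ - 1) * (lam * μmean)) * lam ^ (astar * μmean) := by gcongr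
    _ = exp (-(astar * μmean * (lam - 1 - log lam))) := by
        rw [rpow_def_of_pos hlam0, ← exp_add]
        congr 1
        field_simp
        ring

theorem stmt_3 {Ω : Type*} [MeasurableSpace Ω] (μ : Measure Ω) [IsProbabilityMeasure μ]
    (n : ℕ) (hn : 0 < n) (a : Fin n → ℝ) (ha : ∀ i, 0 < a i)
    (X : Fin n → Ω → ℝ)
    (hmeas : ∀ i, Measurable (X i))
    (hindep : iIndepFun X μ)
    (hdist : ∀ i, μ.map (X i) = expMeasure (a i))
    (μmean astar : ℝ)
    (hμmean : μmean = ∑ i, 1 / a i)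
    (hastar : astar = ⨅ i, a i)
    (lam : ℝ) (hlam0 : 0 < lam) (hlam1 : lam ≤ 1) :
    μ {ω | ∑ i, X i ω ≤ lam * μmean} ≤
      ENNReal.ofReal (Real.exp (-(astar * μmean * (lam - 1 - Real.log lam)))) :=
  stmt_3_general μ n a ha X hmeas hindep hdist μmean astar hμmean hastar lam hlam0 hlam1
end
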